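/- A pair (a, b) of nonnegative integers is a Parikh vector of a binary string ω (i.e., some contiguous substring of ω contains exactly a zeros and b ones) if and only if a + b ≤ |ω| and T_min1(a+b) ≤ b ≤ T_max1(a+b), where T_min1(l) and T_max1(l) are the minimum and maximum numbers of ones over length-l substrings of ω (and (0,0) is always a Parikh vector via the empty substring). -/

import Mathlib

/-!
Sliding a window of fixed length one position to the right changes its number of ones by at
most one. Hence, as the window moves, its number of ones takes every value between its
minimum `Tmin1` and its maximum `Tmax1`, by a discrete intermediate value theorem.
-/

def onesIn (w : List Bool) (i l : ℕ) : ℕ := ((w.drop i).take l).count true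
def zerosIn (w : List Bool) (i l : ℕ) : ℕ := ((w.drop i).take l).count false

def Tmax1 (w : List Bool) (l : ℕ) : ℕ :=
  (Finset.range (w.length - l + 1)).sup (fun i => onesIn w i l)
def Tmin1 (w : List Bool) (l : ℕ) : ℕ :=
  (Finset.range (w.length - l + 1)).inf' (Finset.nonempty_range_iff.mpr (Nat.succ_ne_zero _))
    (fun i => onesIn w i l)

/-- `(a, b)` is a Parikh vector of `w`: some contiguous substring has exactly
`a` zeros and `b` ones. -/
def IsParikhVector (w : List Bool) (a b : ℕ) : Prop :=
  ∃ i : ℕ, i + (a + b) ≤ w.length ∧ zerosIn w i (a + b) = a ∧ onesIn w i (a + b) = b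

namespace Nat

theorem exists_eq_of_map_succ_le {f : ℕ → ℕ} (hf : ∀ k, f (k + 1) ≤ f k + 1)
    {x y b : ℕ} (hxy : x ≤ y) (hx : f x ≤ b) (hy : b ≤ f y) :
    ∃ z ∈ Set.Icc x y, f z = b := by
  induction y, hxy using Nat.le_induction with
  | base => exact ⟨x, Set.left_mem_Icc.2 le_rfl, le_antisymm hx hy⟩
  | succ y hxy ih =>
    by_cases hby : b ≤ f y
    · obtain ⟨z, ⟨hxz, hzy⟩, hz⟩ := ih hby
      exact ⟨z, ⟨hxz, hzy.trans y.le_succ⟩, hz⟩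
    · exact ⟨y + 1, ⟨hxy.trans y.le_succ, le_rfl⟩, by have := hf y; omega⟩

theorem exists_eq_of_le_map_succ {f : ℕ → ℕ} (hf : ∀ k, f k ≤ f (k + 1) + 1)
    {x y b : ℕ} (hxy : x ≤ y) (hx : b ≤ f x) (hy : f y ≤ b) :
    ∃ z ∈ Set.Icc x y, f z = b := by
  induction y, hxy using Nat.le_induction with
  | base => exact ⟨x, Set.left_mem_Icc.2 le_rfl, le_antisymm hy hx⟩
  | succ y hxy ih =>
    by_cases hby : f y ≤ b
    · obtain ⟨z, ⟨hxz, hzy⟩, hz⟩ := ih hby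
      exact ⟨z, ⟨hxz, hzy.trans y.le_succ⟩, hz⟩
    · exact ⟨y + 1, ⟨hxy.trans y.le_succ, le_rfl⟩, by have := hf y; omega⟩

theorem exists_eq_of_step_le_one {f : ℕ → ℕ} (hup : ∀ k, f (k + 1) ≤ f k + 1)
    (hdown : ∀ k, f k ≤ f (k + 1) + 1) {x y b : ℕ} (hx : f x ≤ b) (hy : b ≤ f y) :
    ∃ z ≤ max x y, f z = b := by
  rcases le_total x y with hxy | hyx
  · obtain ⟨z, ⟨-, hzy⟩, hz⟩ := exists_eq_of_map_succ_le hup hxy hx hy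
    exact ⟨z, hzy.trans (le_max_right x y), hz⟩
  · obtain ⟨z, ⟨-, hzx⟩, hz⟩ := exists_eq_of_le_map_succ hdown hyx hy hx
    exact ⟨z, hzx.trans (le_max_left x y), hz⟩

end Nat

section Windows

variable (w : List Bool)

theorem onesIn_add (i l m : ℕ) : onesIn w i (l + m) = onesIn w i l + onesIn w (i + l) m := by
  simp [onesIn, List.take_add, List.count_append]

theorem onesIn_le (i l : ℕ) : onesIn w i l ≤ l :=
  List.count_le_length.trans (List.length_take_le _ _)

theorem onesIn_succ_le (i l : ℕ) : onesIn w (i + 1) l ≤ onesIn w i l + 1 := by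
  have h₁ := onesIn_add w i 1 l
  have h₂ := onesIn_add w i l 1
  have := onesIn_le w (i + l) 1
  rw [Nat.add_comm 1 l] at h₁
  omega

theorem onesIn_le_succ (i l : ℕ) : onesIn w i l ≤ onesIn w (i + 1) l + 1 := by
  have h₁ := onesIn_add w i 1 l
  have h₂ := onesIn_add w i l 1
  have := onesIn_le w i 1
  rw [Nat.add_comm 1 l] at h₁
  omega

theorem zerosIn_add_onesIn {i l : ℕ} (h : i + l ≤ w.length) :
    zerosIn w i l + onesIn w i l = l := by
  rw [zerosIn, onesIn, List.count_false_add_count_true, List.length_take, List.length_drop]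
  omega

theorem Tmin1_le_onesIn {i l : ℕ} (h : i + l ≤ w.length) : Tmin1 w l ≤ onesIn w i l :=
  Finset.inf'_le _ (Finset.mem_range.2 (by omega))

theorem onesIn_le_Tmax1 {i l : ℕ} (h : i + l ≤ w.length) : onesIn w i l ≤ Tmax1 w l :=
  Finset.le_sup (f := fun i => onesIn w i l) (Finset.mem_range.2 (by omega))

theorem exists_onesIn_eq_Tmin1 {l : ℕ} (hl : l ≤ w.length) :
    ∃ i, i + l ≤ w.length ∧ onesIn w i l = Tmin1 w l := by
  obtain ⟨i, hi, h⟩ := Finset.exists_mem_eq_inf' (s := Finset.range (w.length - l + 1))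
    (Finset.nonempty_range_iff.2 (Nat.succ_ne_zero _)) (fun i => onesIn w i l)
  exact ⟨i, by rw [Finset.mem_range] at hi; omega, h.symm⟩

theorem exists_onesIn_eq_Tmax1 {l : ℕ} (hl : l ≤ w.length) :
    ∃ i, i + l ≤ w.length ∧ onesIn w i l = Tmax1 w l := by
  obtain ⟨i, hi, h⟩ := Finset.exists_mem_eq_sup (Finset.range (w.length - l + 1))
    (Finset.nonempty_range_iff.2 (Nat.succ_ne_zero _)) (fun i => onesIn w i l)
  exact ⟨i, by rw [Finset.mem_range] at hi; omega, h.symm⟩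

theorem exists_onesIn_eq_of_mem_Icc {l b : ℕ} (hl : l ≤ w.length)
    (hb : b ∈ Set.Icc (Tmin1 w l) (Tmax1 w l)) :
    ∃ i, i + l ≤ w.length ∧ onesIn w i l = b := by
  obtain ⟨imin, hmin, hmin_eq⟩ := exists_onesIn_eq_Tmin1 w hl
  obtain ⟨imax, hmax, hmax_eq⟩ := exists_onesIn_eq_Tmax1 w hl
  obtain ⟨i, hi, hi_eq⟩ := Nat.exists_eq_of_step_le_one (f := fun i => onesIn w i l)
    (fun i => onesIn_succ_le w i l) (fun i => onesIn_le_succ w i l)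
    (hmin_eq ▸ hb.1 : onesIn w imin l ≤ b) (hmax_eq ▸ hb.2 : b ≤ onesIn w imax l)
  exact ⟨i, by omega, hi_eq⟩

end Windows

theorem parikh_iff_interval (w : List Bool) (a b : ℕ) :
    IsParikhVector w a b ↔
      a + b ≤ w.length ∧ Tmin1 w (a + b) ≤ b ∧ b ≤ Tmax1 w (a + b) := by
  constructor
  · rintro ⟨i, hi, -, hones⟩
    exact ⟨by omega, (Tmin1_le_onesIn w hi).trans_eq hones,
      hones.symm.trans_le (onesIn_le_Tmax1 w hi)⟩
  · rintro ⟨hl, hmin, hmax⟩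
    obtain ⟨i, hi, hones⟩ := exists_onesIn_eq_of_mem_Icc w hl ⟨hmin, hmax⟩
    have hzeros := zerosIn_add_onesIn w hi
    exact ⟨i, hi, by omega, hones⟩
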